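/- arXiv:2401.16480 — 2 statements merged into one kernel-verified Lean document; each statement's English description precedes it below -/
import Mathlib

section
/- (Rectangularized-state identities.) The following hold: ĥ^{(L)}_m N⁰ = L⁰, ĥ^{(L)}_m N¹ = L¹, ĥ^{(R)}_m N⁰ = R⁰, ĥ^{(R)}_m N¹ = R¹, ĥ^{(R)}_{m−1} L⁰ = γ² N¹, ĥ^{(R)}_{m−1} L¹ = −γ² N⁰ + (2γ²+J²) N¹, ĥ^{(L)}_{m+1} R⁰ = (2γ²+J²) N⁰ − γ² N¹, and ĥ^{(L)}_{m+1} R¹ = γ² N⁰. Consequently, (ĥ^{(R)}_{m−1} ĥ^{(L)}_m + ĥ^{(L)}_{m+1} ĥ^{(R)}_m) N^r = (2γ² + J²) N^r for r ∈ {0,1}. -/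
open scoped BigOperators

namespace QuantumBreakdown

/-- Basis index: pairs of an occupation configuration and a spin configuration. -/
abbrev Cfg (M : ℕ) := (Fin M → Bool) × (Fin M → Bool)

/-- The Hilbert space `V_M`. -/
abbrev V (M : ℕ) := Cfg M → ℂ

/-- The basis vector `e_{n,s}`. -/
noncomputable def e (M : ℕ) (p : Cfg M) : V M := Pi.single p 1

/-- The linear operator determined by prescribed images of the basis vectors. -/
noncomputable def mkOp (M : ℕ) (f : Cfg M → V M) : V M →ₗ[ℂ] V M :=
  (Pi.basisFun ℂ (Cfg M)).constr ℂ f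

/-- The left site of edge `m`. -/
def sL (M : ℕ) (m : Fin (M - 1)) : Fin M := ⟨m.1, by have := m.2; omega⟩

/-- The right site of edge `m`. -/
def sR (M : ℕ) (m : Fin (M - 1)) : Fin M := ⟨m.1 + 1, by have := m.2; omega⟩

/-- Move a fermion from site `a` to site `b`. -/
def hop (M : ℕ) (n : Fin M → Bool) (a b : Fin M) : Fin M → Bool :=
  Function.update (Function.update n a false) b true

/-- The hopping term `H_γ`. -/
noncomputable def Hgam (M : ℕ) (γ : Fin (M - 1) → ℝ) : V M →ₗ[ℂ] V M :=
  mkOp M fun p =>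
    -∑ m : Fin (M - 1), (γ m : ℂ) •
      ((if p.1 (sL M m) = true ∧ p.1 (sR M m) = false then
          e M (hop M p.1 (sL M m) (sR M m), p.2) else 0)
        +
       (if p.1 (sR M m) = true ∧ p.1 (sL M m) = false then
          e M (hop M p.1 (sR M m) (sL M m), p.2) else 0))

/-- The breakdown interaction `H_J`. -/
noncomputable def HJop (M : ℕ) (J : Fin (M - 1) → ℝ) : V M →ₗ[ℂ] V M :=
  mkOp M fun p =>
    ∑ m : Fin (M - 1), (J m : ℂ) •
      ((if p.1 (sL M m) = true ∧ p.1 (sR M m) = false ∧ p.2 (sR M m) = false then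
          e M (hop M p.1 (sL M m) (sR M m), Function.update p.2 (sR M m) true) else 0)
        +
       (if p.1 (sR M m) = true ∧ p.1 (sL M m) = false ∧ p.2 (sR M m) = true then
          e M (hop M p.1 (sR M m) (sL M m), Function.update p.2 (sR M m) false) else 0))

/-- The on-site potential `H_μ`. -/
noncomputable def Hmu (M : ℕ) (μ : Fin M → ℝ) : V M →ₗ[ℂ] V M :=
  mkOp M fun p => (∑ m : Fin M, if p.1 m = true then (μ m : ℂ) else 0) • e M p

/-- Pauli `σ^x` at site `m`. -/
noncomputable def sigx (M : ℕ) (m : Fin M) : V M →ₗ[ℂ] V M :=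
  mkOp M fun p => e M (p.1, Function.update p.2 m (!p.2 m))

/-- Pauli `σ^y` at site `m`. -/
noncomputable def sigy (M : ℕ) (m : Fin M) : V M →ₗ[ℂ] V M :=
  mkOp M fun p =>
    (if p.2 m = true then Complex.I else -Complex.I) • e M (p.1, Function.update p.2 m (!p.2 m))

/-- Pauli `σ^z` at site `m`. -/
noncomputable def sigz (M : ℕ) (m : Fin M) : V M →ₗ[ℂ] V M :=
  mkOp M fun p => (if p.2 m = true then (1 : ℂ) else -1) • e M p

/-- The magnetic field term `H_h`. -/
noncomputable def Hh (M : ℕ) (hx hy hz : Fin M → ℝ) : V M →ₗ[ℂ] V M :=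
  ∑ m : Fin M, ((hx m : ℂ) • sigx M m + (hy m : ℂ) • sigy M m + (hz m : ℂ) • sigz M m)

/-- Number of occupied sites of an occupation configuration. -/
def nOcc (M : ℕ) (n : Fin M → Bool) : ℕ := (Finset.univ.filter fun m => n m = true).card

/-- The number operator `N`. -/
noncomputable def numOp (M : ℕ) : V M →ₗ[ℂ] V M :=
  mkOp M fun p => (nOcc M p.1 : ℂ) • e M p

/-- The charge-`Q` sector `W_Q`. -/
noncomputable def sector (M Q : ℕ) : Submodule ℂ (V M) :=
  Submodule.span ℂ { v | ∃ p : Cfg M, nOcc M p.1 = Q ∧ v = e M p }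

/-- The charge-`Q` sector with first spin up, `W_Q^↑`. -/
noncomputable def sectorUp (M : ℕ) (hM : 0 < M) (Q : ℕ) : Submodule ℂ (V M) :=
  Submodule.span ℂ { v | ∃ p : Cfg M, nOcc M p.1 = Q ∧ p.2 ⟨0, hM⟩ = true ∧ v = e M p }

end QuantumBreakdown

namespace QuantumBreakdown

/-- The right-hop term `ĥ^{(R)}_m` associated with edge `m` (moving a fermion
from site `m` to site `m+1`). -/
noncomputable def hRop (M : ℕ) (γ J : Fin (M - 1) → ℝ) (m : Fin (M - 1)) :
    V M →ₗ[ℂ] V M :=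
  mkOp M fun p =>
    if p.1 (sL M m) = true ∧ p.1 (sR M m) = false then
      (-(γ m : ℂ)) • e M (hop M p.1 (sL M m) (sR M m), p.2)
        + (if p.2 (sR M m) = false then
            (J m : ℂ) • e M (hop M p.1 (sL M m) (sR M m), Function.update p.2 (sR M m) true)
          else 0)
    else 0

/-- The left-hop term `ĥ^{(L)}_{m+1}` associated with edge `m` (moving a fermion
from site `m+1` to site `m`). -/
noncomputable def hLop (M : ℕ) (γ J : Fin (M - 1) → ℝ) (m : Fin (M - 1)) :
    V M →ₗ[ℂ] V M :=
  mkOp M fun p =>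
    if p.1 (sR M m) = true ∧ p.1 (sL M m) = false then
      (-(γ m : ℂ)) • e M (hop M p.1 (sR M m) (sL M m), p.2)
        + (if p.2 (sR M m) = true then
            (J m : ℂ) • e M (hop M p.1 (sR M m) (sL M m), Function.update p.2 (sR M m) false)
          else 0)
    else 0

end QuantumBreakdown

/-! Each hopping term sends a basis vector on which it acts to a plain hop with amplitude `-γ`
plus, when the spin at the right end of its edge permits, a hop with amplitude `J` that also
flips that spin; all other spins are untouched. So the identities are linear algebra in the span
of the twelve vectors `e(a,b)`, `eL(a,b)`, `eR(a,b)`, driven by four action formulas. -/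

namespace QuantumBreakdown

open Function

theorem mkOp_e {M : ℕ} (f : Cfg M → V M) (p : Cfg M) : mkOp M f (e M p) = f p := by
  have h := (Pi.basisFun ℂ (Cfg M)).constr_basis ℂ f p
  rwa [Pi.basisFun_apply] at h

theorem sL_ne_sR {M : ℕ} (m : Fin (M - 1)) : sL M m ≠ sR M m :=
  Fin.ne_of_val_ne (Nat.succ_ne_self _).symm

section Hop

variable {M : ℕ} {n : Fin M → Bool} {a b : Fin M}

theorem hop_apply_target : hop M n a b b = true := update_self ..

theorem hop_apply_source (hab : a ≠ b) : hop M n a b a = false := by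
  rw [hop, update_of_ne hab, update_self]

theorem hop_hop (ha : n a = true) (hb : n b = false) : hop M (hop M n a b) b a = n := by
  ext x
  by_cases hxa : x = a
  · subst hxa; simp [hop, ha]
  · by_cases hxb : x = b
    · subst hxb; simp [hop, hxa, hb]
    · simp [hop, hxa, hxb]

end Hop

section Action

variable {M : ℕ} (γ J : Fin (M - 1) → ℝ) {m : Fin (M - 1)} {n σ : Fin M → Bool}

theorem hLop_e (hR : n (sR M m) = true) (hL : n (sL M m) = false) :
    hLop M γ J m (e M (n, σ)) = (-(γ m : ℂ)) • e M (hop M n (sR M m) (sL M m), σ)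
      + if σ (sR M m) = true then
          (J m : ℂ) • e M (hop M n (sR M m) (sL M m), update σ (sR M m) false)
        else 0 := by
  rw [hLop, mkOp_e, if_pos ⟨hR, hL⟩]

theorem hRop_e (hL : n (sL M m) = true) (hR : n (sR M m) = false) :
    hRop M γ J m (e M (n, σ)) = (-(γ m : ℂ)) • e M (hop M n (sL M m) (sR M m), σ)
      + if σ (sR M m) = false then
          (J m : ℂ) • e M (hop M n (sL M m) (sR M m), update σ (sR M m) true)
        else 0 := by
  rw [hRop, mkOp_e, if_pos ⟨hL, hR⟩]

end Action

/- For adjacent edges `el`, `er` (that is, `sR el = sL er`, the paper's site `m`),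
`basisN`, `basisL`, `basisR` are the paper's `e(a,b)`, `eL(a,b)`, `eR(a,b)`. -/

section Rectangularized

variable {M : ℕ} (el er : Fin (M - 1)) (n s : Fin M → Bool)

def spinPair (a b : Bool) : Fin M → Bool := update (update s (sL M er) a) (sR M er) b

noncomputable def basisN (a b : Bool) : V M := e M (n, spinPair er s a b)

noncomputable def basisL (a b : Bool) : V M :=
  e M (hop M n (sL M er) (sL M el), spinPair er s a b)

noncomputable def basisR (a b : Bool) : V M :=
  e M (hop M n (sL M er) (sR M er), spinPair er s a b)

variable {er s} {a b : Bool}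

theorem spinPair_apply_left : spinPair er s a b (sL M er) = a := by
  rw [spinPair, update_of_ne (sL_ne_sR er), update_self]

theorem spinPair_apply_right : spinPair er s a b (sR M er) = b := update_self ..

theorem update_spinPair_left (c : Bool) :
    update (spinPair er s a b) (sL M er) c = spinPair er s c b := by
  rw [spinPair, update_comm (sL_ne_sR er).symm, update_idem]; rfl

theorem update_spinPair_right (c : Bool) :
    update (spinPair er s a b) (sR M er) c = spinPair er s a c := update_idem ..

variable (γ J : Fin (M - 1) → ℝ) {el n}

theorem hLop_basisN (hadj : sR M el = sL M er) (hc : n (sL M er) = true)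
    (hl : n (sL M el) = false) :
    hLop M γ J el (basisN er n s a b) = (-(γ el : ℂ)) • basisL el er n s a b
      + if a then (J el : ℂ) • basisL el er n s false b else 0 := by
  rw [basisN, hLop_e γ J (by rwa [hadj]) hl, hadj, spinPair_apply_left, update_spinPair_left]
  rfl

theorem hRop_basisN (hc : n (sL M er) = true) (hr : n (sR M er) = false) :
    hRop M γ J er (basisN er n s a b) = (-(γ er : ℂ)) • basisR er n s a b
      + if b = false then (J er : ℂ) • basisR er n s a true else 0 := by
  rw [basisN, hRop_e γ J hc hr, spinPair_apply_right, update_spinPair_right]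
  rfl

theorem hRop_basisL (hadj : sR M el = sL M er) (hc : n (sL M er) = true)
    (hl : n (sL M el) = false) :
    hRop M γ J el (basisL el er n s a b) = (-(γ el : ℂ)) • basisN er n s a b
      + if a = false then (J el : ℂ) • basisN er n s true b else 0 := by
  have hne : sL M er ≠ sL M el := hadj ▸ (sL_ne_sR el).symm
  rw [basisL, hRop_e γ J hop_apply_target (by rw [hadj]; exact hop_apply_source hne), hadj,
    hop_hop hc hl, spinPair_apply_left, update_spinPair_left]
  rfl

theorem hLop_basisR (hc : n (sL M er) = true) (hr : n (sR M er) = false) :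
    hLop M γ J er (basisR er n s a b) = (-(γ er : ℂ)) • basisN er n s a b
      + if b then (J er : ℂ) • basisN er n s a false else 0 := by
  rw [basisR, hLop_e γ J hop_apply_target (hop_apply_source (sL_ne_sR er)), hop_hop hc hr,
    spinPair_apply_right, update_spinPair_right]
  rfl

end Rectangularized

section States

variable {M : ℕ} (γ J : ℝ) (el er : Fin (M - 1)) (n s : Fin M → Bool)

noncomputable def stateN0 : V M :=
  (J : ℂ) • basisN er n s false false - (γ : ℂ) • basisN er n s false true
    + (γ : ℂ) • basisN er n s true false

noncomputable def stateN1 : V M :=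
  -((γ : ℂ) • basisN er n s false true) + (γ : ℂ) • basisN er n s true false
    + (J : ℂ) • basisN er n s true true

noncomputable def stateL0 : V M :=
  ((γ : ℂ) ^ 2) • basisL el er n s false true
    - ((γ : ℂ) ^ 2) • basisL el er n s true false

noncomputable def stateL1 : V M :=
  ((γ : ℂ) * J) • basisL el er n s false false
    + ((γ : ℂ) ^ 2 + (J : ℂ) ^ 2) • basisL el er n s false true
    - ((γ : ℂ) ^ 2) • basisL el er n s true false
    - ((γ : ℂ) * J) • basisL el er n s true true

noncomputable def stateR0 : V M :=
  -(((γ : ℂ) * J) • basisR er n s false false)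
    + ((γ : ℂ) ^ 2 + (J : ℂ) ^ 2) • basisR er n s false true
    - ((γ : ℂ) ^ 2) • basisR er n s true false + ((γ : ℂ) * J) • basisR er n s true true

noncomputable def stateR1 : V M :=
  ((γ : ℂ) ^ 2) • basisR er n s false true - ((γ : ℂ) ^ 2) • basisR er n s true false

theorem hLop_stateN0 (hadj : sR M el = sL M er) (hc : n (sL M er) = true)
    (hl : n (sL M el) = false) :
    hLop M (fun _ => γ) (fun _ => J) el (stateN0 γ J er n s) = stateL0 γ el er n s := by
  simp only [stateN0, stateL0, map_add, map_sub, map_smul, hLop_basisN _ _ hadj hc hl,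
    Bool.false_eq_true, ↓reduceIte]
  module

theorem hLop_stateN1 (hadj : sR M el = sL M er) (hc : n (sL M er) = true)
    (hl : n (sL M el) = false) :
    hLop M (fun _ => γ) (fun _ => J) el (stateN1 γ J er n s) = stateL1 γ J el er n s := by
  simp only [stateN1, stateL1, map_add, map_neg, map_smul, hLop_basisN _ _ hadj hc hl,
    Bool.false_eq_true, ↓reduceIte]
  module

theorem hRop_stateN0 (hc : n (sL M er) = true) (hr : n (sR M er) = false) :
    hRop M (fun _ => γ) (fun _ => J) er (stateN0 γ J er n s) = stateR0 γ J er n s := by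
  simp only [stateN0, stateR0, map_add, map_sub, map_smul, hRop_basisN _ _ hc hr,
    Bool.true_eq_false, ↓reduceIte]
  module

theorem hRop_stateN1 (hc : n (sL M er) = true) (hr : n (sR M er) = false) :
    hRop M (fun _ => γ) (fun _ => J) er (stateN1 γ J er n s) = stateR1 γ er n s := by
  simp only [stateN1, stateR1, map_add, map_neg, map_smul, hRop_basisN _ _ hc hr,
    Bool.true_eq_false, ↓reduceIte]
  module

theorem hRop_stateL0 (hadj : sR M el = sL M er) (hc : n (sL M er) = true)
    (hl : n (sL M el) = false) :
    hRop M (fun _ => γ) (fun _ => J) el (stateL0 γ el er n s)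
      = ((γ : ℂ) ^ 2) • stateN1 γ J er n s := by
  simp only [stateL0, stateN1, map_sub, map_smul, hRop_basisL _ _ hadj hc hl,
    Bool.true_eq_false, ↓reduceIte]
  module

theorem hRop_stateL1 (hadj : sR M el = sL M er) (hc : n (sL M er) = true)
    (hl : n (sL M el) = false) :
    hRop M (fun _ => γ) (fun _ => J) el (stateL1 γ J el er n s)
      = -(((γ : ℂ) ^ 2) • stateN0 γ J er n s)
        + (2 * (γ : ℂ) ^ 2 + (J : ℂ) ^ 2) • stateN1 γ J er n s := by
  simp only [stateL1, stateN0, stateN1, map_add, map_sub, map_smul, hRop_basisL _ _ hadj hc hl,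
    Bool.true_eq_false, ↓reduceIte]
  module

theorem hLop_stateR0 (hc : n (sL M er) = true) (hr : n (sR M er) = false) :
    hLop M (fun _ => γ) (fun _ => J) er (stateR0 γ J er n s)
      = (2 * (γ : ℂ) ^ 2 + (J : ℂ) ^ 2) • stateN0 γ J er n s
        - ((γ : ℂ) ^ 2) • stateN1 γ J er n s := by
  simp only [stateR0, stateN0, stateN1, map_add, map_sub, map_neg, map_smul,
    hLop_basisR _ _ hc hr, Bool.false_eq_true, ↓reduceIte]
  module

theorem hLop_stateR1 (hc : n (sL M er) = true) (hr : n (sR M er) = false) :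
    hLop M (fun _ => γ) (fun _ => J) er (stateR1 γ er n s)
      = ((γ : ℂ) ^ 2) • stateN0 γ J er n s := by
  simp only [stateR1, stateN0, map_sub, map_smul, hLop_basisR _ _ hc hr,
    Bool.false_eq_true, ↓reduceIte]
  module

theorem hRop_comp_hLop_add_hLop_comp_hRop_stateN0 (hadj : sR M el = sL M er)
    (hc : n (sL M er) = true) (hl : n (sL M el) = false) (hr : n (sR M er) = false) :
    (hRop M (fun _ => γ) (fun _ => J) el ∘ₗ hLop M (fun _ => γ) (fun _ => J) el
        + hLop M (fun _ => γ) (fun _ => J) er ∘ₗ hRop M (fun _ => γ) (fun _ => J) er)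
        (stateN0 γ J er n s)
      = (2 * (γ : ℂ) ^ 2 + (J : ℂ) ^ 2) • stateN0 γ J er n s := by
  rw [LinearMap.add_apply, LinearMap.comp_apply, LinearMap.comp_apply,
    hLop_stateN0 γ J el er n s hadj hc hl, hRop_stateN0 γ J er n s hc hr,
    hRop_stateL0 γ J el er n s hadj hc hl, hLop_stateR0 γ J er n s hc hr]
  module

theorem hRop_comp_hLop_add_hLop_comp_hRop_stateN1 (hadj : sR M el = sL M er)
    (hc : n (sL M er) = true) (hl : n (sL M el) = false) (hr : n (sR M er) = false) :
    (hRop M (fun _ => γ) (fun _ => J) el ∘ₗ hLop M (fun _ => γ) (fun _ => J) el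
        + hLop M (fun _ => γ) (fun _ => J) er ∘ₗ hRop M (fun _ => γ) (fun _ => J) er)
        (stateN1 γ J er n s)
      = (2 * (γ : ℂ) ^ 2 + (J : ℂ) ^ 2) • stateN1 γ J er n s := by
  rw [LinearMap.add_apply, LinearMap.comp_apply, LinearMap.comp_apply,
    hLop_stateN1 γ J el er n s hadj hc hl, hRop_stateN1 γ J er n s hc hr,
    hRop_stateL1 γ J el er n s hadj hc hl, hLop_stateR1 γ J er n s hc hr]
  module

end States

end QuantumBreakdown

open QuantumBreakdown

/-- rectangularized-state identities. With uniform couplings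
`γ, J`, a site `m = i+1` (so `2 ≤ m ≤ M−1`, i.e. `1 ≤ i` and `i+1 < M`) carrying
the fermion, and the singly rectangularized states `N⁰, N¹, L⁰, L¹, R⁰, R¹`
built on the three sites `m−1, m, m+1`:
`ĥ^{(L)}_m N⁰ = L⁰`, `ĥ^{(L)}_m N¹ = L¹`, `ĥ^{(R)}_m N⁰ = R⁰`, `ĥ^{(R)}_m N¹ = R¹`,
`ĥ^{(R)}_{m−1} L⁰ = γ² N¹`, `ĥ^{(R)}_{m−1} L¹ = −γ² N⁰ + (2γ²+J²) N¹`,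
`ĥ^{(L)}_{m+1} R⁰ = (2γ²+J²) N⁰ − γ² N¹`, `ĥ^{(L)}_{m+1} R¹ = γ² N⁰`; consequently
`(ĥ^{(R)}_{m−1} ĥ^{(L)}_m + ĥ^{(L)}_{m+1} ĥ^{(R)}_m) N^r = (2γ²+J²) N^r` for `r ∈ {0,1}`. -/
theorem rectangularized_state_identities (M : ℕ) (γ J : ℝ)
    (i : ℕ) (h1 : 1 ≤ i) (h2 : i + 1 < M) (n s : Fin M → Bool)
    (hnm : n ⟨i, by omega⟩ = true) (hnl : n ⟨i - 1, by omega⟩ = false)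
    (hnr : n ⟨i + 1, by omega⟩ = false) :
    let γf : Fin (M - 1) → ℝ := fun _ => γ
    let Jf : Fin (M - 1) → ℝ := fun _ => J
    let el : Fin (M - 1) := ⟨i - 1, by omega⟩  -- edge m−1
    let er : Fin (M - 1) := ⟨i, by omega⟩      -- edge m
    let eab : Bool → Bool → V M := fun a b =>
      e M (n, Function.update (Function.update s ⟨i, by omega⟩ a) ⟨i + 1, h2⟩ b)
    let eLab : Bool → Bool → V M := fun a b =>
      e M (Function.update (Function.update n ⟨i, by omega⟩ false) ⟨i - 1, by omega⟩ true,
        Function.update (Function.update s ⟨i, by omega⟩ a) ⟨i + 1, h2⟩ b)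
    let eRab : Bool → Bool → V M := fun a b =>
      e M (Function.update (Function.update n ⟨i, by omega⟩ false) ⟨i + 1, h2⟩ true,
        Function.update (Function.update s ⟨i, by omega⟩ a) ⟨i + 1, h2⟩ b)
    let N0 : V M := (J : ℂ) • eab false false - (γ : ℂ) • eab false true
      + (γ : ℂ) • eab true false
    let N1 : V M := -((γ : ℂ) • eab false true) + (γ : ℂ) • eab true false
      + (J : ℂ) • eab true true
    let L0 : V M := ((γ : ℂ) ^ 2) • eLab false true - ((γ : ℂ) ^ 2) • eLab true false
    let L1 : V M := ((γ : ℂ) * J) • eLab false false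
      + ((γ : ℂ) ^ 2 + (J : ℂ) ^ 2) • eLab false true
      - ((γ : ℂ) ^ 2) • eLab true false - ((γ : ℂ) * J) • eLab true true
    let R0 : V M := -(((γ : ℂ) * J) • eRab false false)
      + ((γ : ℂ) ^ 2 + (J : ℂ) ^ 2) • eRab false true
      - ((γ : ℂ) ^ 2) • eRab true false + ((γ : ℂ) * J) • eRab true true
    let R1 : V M := ((γ : ℂ) ^ 2) • eRab false true - ((γ : ℂ) ^ 2) • eRab true false
    (hLop M γf Jf el N0 = L0) ∧
    (hLop M γf Jf el N1 = L1) ∧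
    (hRop M γf Jf er N0 = R0) ∧
    (hRop M γf Jf er N1 = R1) ∧
    (hRop M γf Jf el L0 = ((γ : ℂ) ^ 2) • N1) ∧
    (hRop M γf Jf el L1 = -(((γ : ℂ) ^ 2) • N0) + (2 * (γ : ℂ) ^ 2 + (J : ℂ) ^ 2) • N1) ∧
    (hLop M γf Jf er R0 = (2 * (γ : ℂ) ^ 2 + (J : ℂ) ^ 2) • N0 - ((γ : ℂ) ^ 2) • N1) ∧
    (hLop M γf Jf er R1 = ((γ : ℂ) ^ 2) • N0) ∧
    ((hRop M γf Jf el ∘ₗ hLop M γf Jf el + hLop M γf Jf er ∘ₗ hRop M γf Jf er) N0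
      = (2 * (γ : ℂ) ^ 2 + (J : ℂ) ^ 2) • N0) ∧
    ((hRop M γf Jf el ∘ₗ hLop M γf Jf el + hLop M γf Jf er ∘ₗ hRop M γf Jf er) N1
      = (2 * (γ : ℂ) ^ 2 + (J : ℂ) ^ 2) • N1) := by
  intro γf Jf el er eab eLab eRab N0 N1 L0 L1 R0 R1
  have hadj : sR M el = sL M er := Fin.ext (Nat.sub_add_cancel h1)
  exact ⟨hLop_stateN0 γ J el er n s hadj hnm hnl, hLop_stateN1 γ J el er n s hadj hnm hnl,
    hRop_stateN0 γ J er n s hnm hnr, hRop_stateN1 γ J er n s hnm hnr,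
    hRop_stateL0 γ J el er n s hadj hnm hnl, hRop_stateL1 γ J el er n s hadj hnm hnl,
    hLop_stateR0 γ J er n s hnm hnr, hLop_stateR1 γ J er n s hnm hnr,
    hRop_comp_hLop_add_hLop_comp_hRop_stateN0 γ J el er n s hadj hnm hnl hnr,
    hRop_comp_hLop_add_hLop_comp_hRop_stateN1 γ J el er n s hadj hnm hnl hnr⟩
end

section
/- Suppose M is odd and γ_m ≠ 0 for every edge m (the couplings J_m are arbitrary, possibly non-uniform). Then the kernel of H_γ + H_J restricted to the single-fermion sector W₁^↑ has dimension at least 2^{M−1}; i.e. the Q = 1 sector of the extended quantum breakdown model with odd chain length possesses at least 2^{M−1} exact zero modes, a number growing exponentially with the system size. -/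
open scoped BigOperators

open QuantumBreakdown

/-!
Grade the basis of `W_Q^↑` by the parity of the sum of the occupied positions. Every term of
`H_γ + H_J` moves one fermion across an edge and never touches the first spin, so the operator
maps the even part of `W_Q^↑` into the odd part, and its kernel on the even part has dimension
at least `dim(even) - dim(odd)`. For `Q = 1` and odd `M` there is one more even site than odd
site, each carrying `2^(M-1)` spin configurations with `s₁ = 1`.
-/

open Finset Module

theorem Submodule.finrank_map_add_finrank_inf_ker {K V V' : Type*} [DivisionRing K]
    [AddCommGroup V] [Module K V] [AddCommGroup V'] [Module K V']
    (A : V →ₗ[K] V') (U : Submodule K V) [FiniteDimensional K U] :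
    finrank K (U.map A) + finrank K ↥(U ⊓ LinearMap.ker A) = finrank K U := by
  rw [← LinearMap.range_domRestrict, ← Submodule.map_comap_subtype,
    Submodule.finrank_map_subtype_eq, ← LinearMap.ker_domRestrict]
  exact LinearMap.finrank_range_add_finrank_ker _

theorem Fin.card_filter_val_eq_count (n : ℕ) (P : ℕ → Prop) [DecidablePred P] :
    #{x : Fin n | P x} = Nat.count P n := by
  rw [Nat.count_eq_card_filter_range, ← card_map Fin.valEmbedding]
  congr 1
  ext k
  simp only [mem_map, mem_filter, mem_univ, true_and, Fin.valEmbedding_apply, mem_range]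
  exact ⟨fun ⟨x, hx, hk⟩ => hk ▸ ⟨x.2, hx⟩, fun ⟨hk, hP⟩ => ⟨⟨k, hk⟩, hP, rfl⟩⟩

theorem Nat.count_natCast_zmod_two_eq (c : ZMod 2) (r : ℕ) :
    Nat.count (fun k => (k : ZMod 2) = c) (2 * r) = r := by
  have hc : ((if (0 : ZMod 2) = c then 1 else 0) + if (1 : ZMod 2) = c then 1 else 0) = 1 := by
    revert c; decide
  induction r with
  | zero => rfl
  | succ r ih =>
    have h2 : ((2 * r : ℕ) : ZMod 2) = 0 := (ZMod.natCast_eq_zero_iff_even).2 (even_two_mul r)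
    rw [mul_add_one, Nat.count_succ, Nat.count_succ, ih]
    simp only [Nat.cast_add_one, h2, zero_add, add_assoc, hc]

theorem Fintype.card_filter_apply_eq_true {ι : Type*} [Fintype ι] [DecidableEq ι] (i : ι) :
    #{t : ι → Bool | t i = true} = 2 ^ (Fintype.card ι - 1) := by
  simpa only [Fintype.piFinset_univ, card_univ, Fintype.card_bool] using
    Fintype.card_filter_piFinset_const_eq_of_mem (univ : Finset Bool) i (mem_univ true)

namespace QuantumBreakdown

variable {M : ℕ}

def occSum {β : Type*} [AddCommMonoid β] (n : Fin M → Bool) (X : Fin M → β) : β :=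
  ∑ m, if n m = true then X m else 0

section occSum

variable {β : Type*} [AddCommMonoid β] (X : Fin M → β)

lemma occSum_update_add (n : Fin M → Bool) (a : Fin M) (v : Bool) :
    occSum (Function.update n a v) X + (if n a = true then X a else 0)
      = occSum n X + (if v = true then X a else 0) := by
  simp only [occSum, Function.apply_update (fun m b => if b = true then X m else 0)]
  rw [sum_update_of_mem (mem_univ a), sum_eq_add_sum_sdiff_singleton_of_mem (mem_univ a)]
  ac_rfl

lemma occSum_hop_add {n : Fin M → Bool} {a b : Fin M} (ha : n a = true) (hb : n b = false) :
    occSum (hop M n a b) X + X a = occSum n X + X b := by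
  have hab : b ≠ a := fun h => by simp [h, ha] at hb
  have h₁ := occSum_update_add X n a false
  have h₂ := occSum_update_add X (Function.update n a false) b true
  simp only [ha, hb, Function.update_of_ne hab, if_true, if_false, Bool.false_eq_true,
    add_zero] at h₁ h₂
  rw [hop, h₂, add_right_comm, h₁]

end occSum

lemma nOcc_eq_occSum (n : Fin M → Bool) : nOcc M n = occSum n fun _ => 1 :=
  card_filter _ _

lemma nOcc_hop {n : Fin M → Bool} {a b : Fin M} (ha : n a = true) (hb : n b = false) :
    nOcc M (hop M n a b) = nOcc M n := by
  rw [nOcc_eq_occSum, nOcc_eq_occSum]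
  exact Nat.add_right_cancel (occSum_hop_add _ ha hb)

def posParity (n : Fin M → Bool) : ZMod 2 := occSum n fun m => (m.1 : ZMod 2)

lemma posParity_hop {n : Fin M → Bool} {a b : Fin M} (ha : n a = true) (hb : n b = false)
    (hab : (b.1 : ZMod 2) = a.1 + 1) :
    posParity (hop M n a b) = posParity n + 1 := by
  have h := occSum_hop_add (fun m => (m.1 : ZMod 2)) ha hb
  rw [hab, ← add_assoc] at h
  exact add_right_cancel (b := (a.1 : ZMod 2)) (by rw [posParity, posParity, h]; ring)

lemma sR_parity (m : Fin (M - 1)) : ((sR M m).1 : ZMod 2) = (sL M m).1 + 1 := by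
  simp [sL, sR]

lemma sL_parity (m : Fin (M - 1)) : ((sL M m).1 : ZMod 2) = (sR M m).1 + 1 := by
  rw [sR_parity, add_assoc, (by decide : (1 + 1 : ZMod 2) = 0), add_zero]

lemma mkOp_apply_e (f : Cfg M → V M) (p : Cfg M) : mkOp M f (e M p) = f p := by
  rw [e, ← Pi.basisFun_apply, mkOp, Module.Basis.constr_basis]

lemma finrank_span_image_e (S : Finset (Cfg M)) :
    finrank ℂ (Submodule.span ℂ (e M '' S)) = #S := by
  have he : e M = Pi.basisFun ℂ (Cfg M) := funext fun p => (Pi.basisFun_apply ℂ _ p).symm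
  rw [he, Set.image_eq_range, finrank_span_eq_card]
  · exact Fintype.card_coe S
  · exact (Pi.basisFun ℂ (Cfg M)).linearIndependent.comp _ Subtype.val_injective

def upConfigs (M : ℕ) (h : 0 < M) (Q : ℕ) (c : ZMod 2) : Finset (Cfg M) :=
  {p | nOcc M p.1 = Q ∧ p.2 ⟨0, h⟩ = true ∧ posParity p.1 = c}

variable (h : 0 < M)

section parityGrading

variable (Q : ℕ)

lemma span_upConfigs_le_sectorUp (c : ZMod 2) :
    Submodule.span ℂ (e M '' upConfigs M h Q c) ≤ sectorUp M h Q := by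
  rw [Submodule.span_le]
  rintro _ ⟨p, hp, rfl⟩
  simp only [upConfigs, mem_coe, mem_filter, mem_univ, true_and] at hp
  exact Submodule.subset_span ⟨p, hp.1, hp.2.1, rfl⟩

lemma hop_mem_upConfigs {c : ZMod 2} {p : Cfg M} (hp : p ∈ upConfigs M h Q c) {a b : Fin M}
    (ha : p.1 a = true) (hb : p.1 b = false) (hab : (b.1 : ZMod 2) = a.1 + 1)
    {s : Fin M → Bool} (hs : s ⟨0, h⟩ = p.2 ⟨0, h⟩) :
    (hop M p.1 a b, s) ∈ upConfigs M h Q (c + 1) := by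
  simp only [upConfigs, mem_filter, mem_univ, true_and] at hp ⊢
  exact ⟨(nOcc_hop ha hb).trans hp.1, hs.trans hp.2.1, by rw [posParity_hop ha hb hab, hp.2.2]⟩

lemma ite_e_mem_span {P : Prop} [Decidable P] {q : Cfg M} {S : Finset (Cfg M)}
    (hq : P → q ∈ S) : (if P then e M q else 0) ∈ Submodule.span ℂ (e M '' S) := by
  split_ifs with hP
  · exact Submodule.subset_span ⟨q, hq hP, rfl⟩
  · exact Submodule.zero_mem _

lemma map_span_upConfigs_le (γ J : Fin (M - 1) → ℝ) (c : ZMod 2) :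
    (Submodule.span ℂ (e M '' upConfigs M h Q c)).map (Hgam M γ + HJop M J)
      ≤ Submodule.span ℂ (e M '' upConfigs M h Q (c + 1)) := by
  rw [Submodule.map_span_le]
  rintro _ ⟨p, hp, rfl⟩
  have hs (m : Fin (M - 1)) (v : Bool) :
      Function.update p.2 (sR M m) v ⟨0, h⟩ = p.2 ⟨0, h⟩ :=
    Function.update_of_ne (fun h' => by simp [sR, Fin.ext_iff] at h') _ _
  rw [LinearMap.add_apply, Hgam, HJop, mkOp_apply_e, mkOp_apply_e]
  refine add_mem (neg_mem (sum_mem fun m _ => Submodule.smul_mem _ _ (add_mem ?_ ?_)))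
    (sum_mem fun m _ => Submodule.smul_mem _ _ (add_mem ?_ ?_)) <;> refine ite_e_mem_span ?_
  · exact fun hc => hop_mem_upConfigs h Q hp hc.1 hc.2 (sR_parity m) rfl
  · exact fun hc => hop_mem_upConfigs h Q hp hc.1 hc.2 (sL_parity m) rfl
  · exact fun hc => hop_mem_upConfigs h Q hp hc.1 hc.2.1 (sR_parity m) (hs m true)
  · exact fun hc => hop_mem_upConfigs h Q hp hc.1 hc.2.1 (sL_parity m) (hs m false)

end parityGrading

def occAt (x : Fin M) : Fin M → Bool := fun m => decide (m = x)

lemma nOcc_eq_one_iff {n : Fin M → Bool} : nOcc M n = 1 ↔ ∃ x, n = occAt x := by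
  rw [nOcc, card_eq_one]
  refine exists_congr fun x => ?_
  simp only [Finset.ext_iff, funext_iff, mem_filter, mem_univ, true_and, mem_singleton, occAt]
  exact forall_congr' fun m => by cases n m <;> simp

lemma posParity_occAt (x : Fin M) : posParity (occAt x) = x.1 := by
  simp [posParity, occSum, occAt]

lemma occAt_injective : Function.Injective (occAt (M := M)) := fun x y hxy => by
  simpa [occAt] using congrFun hxy x

lemma card_upConfigs_one (c : ZMod 2) :
    #(upConfigs M h 1 c) = #{x : Fin M | (x.1 : ZMod 2) = c} * 2 ^ (M - 1) := by
  have hspins := Fintype.card_filter_apply_eq_true (⟨0, h⟩ : Fin M)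
  rw [Fintype.card_fin] at hspins
  rw [← hspins, ← card_product]
  refine (card_bij (fun q _ => (occAt q.1, q.2)) ?_ ?_ ?_).symm
  · rintro ⟨x, t⟩ hq
    simp only [mem_product, mem_filter, mem_univ, true_and] at hq
    simp only [upConfigs, mem_filter, mem_univ, true_and, nOcc_eq_one_iff, posParity_occAt]
    exact ⟨⟨x, rfl⟩, hq.2, hq.1⟩
  · rintro ⟨x, t⟩ - ⟨y, s⟩ - hxy
    simp only [Prod.mk.injEq] at hxy ⊢
    exact ⟨occAt_injective hxy.1, hxy.2⟩
  · rintro ⟨n, t⟩ hp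
    simp only [upConfigs, mem_filter, mem_univ, true_and, nOcc_eq_one_iff] at hp
    obtain ⟨⟨x, rfl⟩, ht, hx⟩ := hp
    rw [posParity_occAt] at hx
    exact ⟨(x, t), by simp [hx, ht], rfl⟩

lemma card_upConfigs_one_zero (hodd : Odd M) :
    #(upConfigs M h 1 0) = #(upConfigs M h 1 1) + 2 ^ (M - 1) := by
  obtain ⟨r, rfl⟩ := hodd
  have h2 : ((2 * r : ℕ) : ZMod 2) = 0 := (ZMod.natCast_eq_zero_iff_even).2 (even_two_mul r)
  rw [card_upConfigs_one, card_upConfigs_one,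
    Fin.card_filter_val_eq_count _ fun k => (k : ZMod 2) = 0,
    Fin.card_filter_val_eq_count _ fun k => (k : ZMod 2) = 1, Nat.count_succ, Nat.count_succ,
    Nat.count_natCast_zmod_two_eq, Nat.count_natCast_zmod_two_eq, h2]
  simp +decide
  ring

end QuantumBreakdown

/-- for odd chain length `M` and nonvanishing hoppings
`γ_m ≠ 0` (with `J` arbitrary, possibly non-uniform), the kernel of
`H_γ + H_J` restricted to the single-fermion sector `W₁^↑` has dimension at
least `2^{M−1}`: exponentially many exact zero modes. -/
theorem odd_chain_zero_modes_Q1 (M : ℕ) (hM : 2 ≤ M) (hodd : Odd M)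
    (γ J : Fin (M - 1) → ℝ) :
    2 ^ (M - 1) ≤ Module.finrank ℂ
      ↥(sectorUp M (by omega) 1 ⊓ LinearMap.ker (Hgam M γ + HJop M J)) := by
  have h : 0 < M := by omega
  let H := Hgam M γ + HJop M J
  let U : ZMod 2 → Submodule ℂ (V M) := fun c => Submodule.span ℂ (e M '' upConfigs M h 1 c)
  have hdim : finrank ℂ (U 0) = finrank ℂ (U 1) + 2 ^ (M - 1) := by
    simp only [U, finrank_span_image_e, card_upConfigs_one_zero h hodd]
  have hrank : finrank ℂ ((U 0).map H) + finrank ℂ ↥(U 0 ⊓ LinearMap.ker H) = finrank ℂ (U 0) :=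
    Submodule.finrank_map_add_finrank_inf_ker H (U 0)
  have hmap : finrank ℂ ((U 0).map H) ≤ finrank ℂ (U 1) :=
    Submodule.finrank_mono (map_span_upConfigs_le h 1 γ J 0)
  calc 2 ^ (M - 1) ≤ finrank ℂ ↥(U 0 ⊓ LinearMap.ker H) := by omega
    _ ≤ finrank ℂ ↥(sectorUp M h 1 ⊓ LinearMap.ker H) :=
      Submodule.finrank_mono (inf_le_inf_right _ (span_upConfigs_le_sectorUp h 1 0))
end
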